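/- arXiv:0905.3580 — 8 statements merged into one kernel-verified Lean document; each statement's English description precedes it below -/
import Mathlib

section
/- Let A be a nontrivial reduced commutative ring whose only idempotents are 0 and 1 (equivalently, whose prime spectrum is connected), let l be a field equipped with an injective ring homomorphism l → A making A an l-algebra, and let f ∈ A be integral over l. Then the l-subalgebra of A generated by f (Algebra.adjoin l {f}) is a field. -/
/-! Since `f` is integral, `l[f]` is a finite-dimensional `l`-algebra, hence Artinian; being
reduced, it is semisimple, so each of its ideals is generated by an idempotent. The idempotents
of `l[f]` are those of `A`, namely `0` and `1`, so `l[f]` has no ideals besides `⊥` and `⊤`. -/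

theorem IsSemisimpleRing.isField_of_isIdempotentElem {R : Type*} [CommRing R] [Nontrivial R]
    [IsSemisimpleRing R] (hidem : ∀ e : R, IsIdempotentElem e → e = 0 ∨ e = 1) :
    IsField R := by
  refine Ring.isField_iff_isSimpleOrder_ideal.mpr ⟨fun I ↦ ?_⟩
  obtain ⟨e, he, rfl⟩ := IsSemisimpleRing.ideal_eq_span_idempotent I
  rcases hidem e he with rfl | rfl
  · exact .inl (Ideal.span_singleton_eq_bot.mpr rfl)
  · exact .inr Ideal.span_singleton_one

theorem IsArtinianRing.isField_of_isReduced_of_isIdempotentElem {R : Type*} [CommRing R]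
    [Nontrivial R] [IsArtinianRing R] [IsReduced R]
    (hidem : ∀ e : R, IsIdempotentElem e → e = 0 ∨ e = 1) : IsField R :=
  have := IsArtinianRing.isSemisimpleRing_of_isReduced R
  IsSemisimpleRing.isField_of_isIdempotentElem hidem

theorem isIdempotentElem_eq_zero_or_one_of_injective {R S F : Type*} [Semiring R] [Semiring S]
    [FunLike F R S] [RingHomClass F R S] {φ : F} (hφ : Function.Injective φ)
    (hidem : ∀ e : S, IsIdempotentElem e → e = 0 ∨ e = 1) (e : R) (he : IsIdempotentElem e) :
    e = 0 ∨ e = 1 := by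
  rcases hidem (φ e) (he.map φ) with h | h
  · exact .inl (hφ (by rw [h, map_zero]))
  · exact .inr (hφ (by rw [h, map_one]))

theorem adjoin_integral_isField_of_connected_reduced_general
    {l A : Type*} [Field l] [CommRing A] [Nontrivial A] [IsReduced A]
    [Algebra l A]
    (hidem : ∀ e : A, IsIdempotentElem e → e = 0 ∨ e = 1)
    (f : A) (hf : IsIntegral l f) :
    IsField (Algebra.adjoin l {f}) := by
  have : Module.Finite l (Algebra.adjoin l {f}) := Algebra.finite_adjoin_simple_of_isIntegral hf
  have : IsArtinianRing (Algebra.adjoin l {f}) := isArtinian_of_tower l inferInstance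
  have hval : Function.Injective (Algebra.adjoin l {f}).val := Subtype.val_injective
  have : IsReduced (Algebra.adjoin l {f}) := isReduced_of_injective _ hval
  exact IsArtinianRing.isField_of_isReduced_of_isIdempotentElem
    (isIdempotentElem_eq_zero_or_one_of_injective hval hidem)

/-- **Key algebraic step of Lemma 4.1.**
Let `A` be a nontrivial reduced commutative ring whose only idempotents are `0` and `1`,
let `l` be a field with an injective ring homomorphism into `A` making `A` an `l`-algebra,
and let `f ∈ A` be integral over `l`.  Then the `l`-subalgebra of `A` generated by `f`
is a field. -/
theorem adjoin_integral_isField_of_connected_reduced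
    {l A : Type*} [Field l] [CommRing A] [Nontrivial A] [IsReduced A]
    [Algebra l A]
    (hinj : Function.Injective (algebraMap l A))
    (hidem : ∀ e : A, IsIdempotentElem e → e = 0 ∨ e = 1)
    (f : A) (hf : IsIntegral l f) :
    IsField (Algebra.adjoin l {f}) :=
  adjoin_integral_isField_of_connected_reduced_general hidem f hf
end

section
/- Let A be a commutative Noetherian ring, let k be a field of characteristic zero, and let l be a subfield of k. Suppose given a ring homomorphism f' : l → A and a ring homomorphism f₀ : k → A/nil(A) such that the restriction of f₀ to l equals the composition of f' with the quotient projection π : A → A/nil(A). Then there exists a ring homomorphism f : k → A such that π ∘ f = f₀ and the restriction of f to l equals f'. -/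
/-!
A field extension `k/l` of characteristic zero is formally smooth: over a transcendence basis it
is purely transcendental followed by an algebraic, hence separable, extension. Since `A` is
Noetherian its nilradical is nilpotent, so the infinitesimal lifting property of `k` over `l`
lifts `f₀`, viewed as an `l`-algebra map through `f'`, to an `l`-algebra map `k → A`.
-/

theorem Algebra.FormallySmooth.of_charZero (K L : Type*) [Field K] [Field L] [Algebra K L]
    [CharZero K] : Algebra.FormallySmooth K L := by
  obtain ⟨s, hs⟩ := exists_isTranscendenceBasis K L
  have : Algebra.IsAlgebraic (IntermediateField.adjoin K (Set.range ((↑) : s → L))) L :=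
    hs.isAlgebraic_field
  have : CharZero (IntermediateField.adjoin K (Set.range ((↑) : s → L))) :=
    charZero_of_injective_algebraMap (algebraMap K _).injective
  exact .of_algebraicIndependent_of_isSeparable hs.1

theorem Algebra.FormallySmooth.exists_ringHom_lift {R S B : Type*} [CommRing R] [CommRing S]
    [CommRing B] [Algebra R S] [Algebra.FormallySmooth R S] {I : Ideal B} (hI : IsNilpotent I)
    (φ : R →+* B) (g : S →+* B ⧸ I)
    (hg : g.comp (algebraMap R S) = (Ideal.Quotient.mk I).comp φ) :
    ∃ f : S →+* B, (Ideal.Quotient.mk I).comp f = g ∧ f.comp (algebraMap R S) = φ := by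
  let := φ.toAlgebra
  obtain ⟨f, hf⟩ := exists_lift I hI (⟨g, RingHom.congr_fun hg⟩ : S →ₐ[R] B ⧸ I)
  exact ⟨f, congr_arg AlgHom.toRingHom hf, f.comp_algebraMap⟩

/-- **Second assertion of Lemma 4.2** (characteristic-zero case).
Let `A` be a commutative Noetherian ring, `k` a field of characteristic zero and `l` a
subfield of `k`.  Given a ring homomorphism `f' : l → A` and a ring homomorphism
`f₀ : k → A / nil(A)` whose restriction to `l` is the composition of `f'` with the
quotient projection `π`, there exists a ring homomorphism `f : k → A` with `π ∘ f = f₀`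
whose restriction to `l` is `f'`. -/
theorem ringHom_lift_of_nilradical_compatible
    {A : Type*} [CommRing A] [IsNoetherianRing A]
    {k : Type*} [Field k] [CharZero k] (l : Subfield k)
    (f' : l →+* A) (f₀ : k →+* A ⧸ nilradical A)
    (hcompat : f₀.comp l.subtype = (Ideal.Quotient.mk (nilradical A)).comp f') :
    ∃ f : k →+* A,
      (Ideal.Quotient.mk (nilradical A)).comp f = f₀ ∧ f.comp l.subtype = f' := by
  have : Algebra.FormallySmooth l k := .of_charZero l k
  exact Algebra.FormallySmooth.exists_ringHom_lift (IsNoetherianRing.isNilpotent_nilradical A)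
    f' f₀ hcompat
end

section
/- Let k be a field of characteristic zero (so that k is canonically a ℚ-algebra) and let A be a commutative k-algebra of finite type. Then there exist an intermediate field m with ℚ ⊆ m ⊆ k which is finitely generated as a field extension of ℚ, and a finite type m-algebra B, together with an isomorphism of k-algebras A ≅ k ⊗_m B. -/
/-!
A finite type algebra over a field is finitely presented (Hilbert's basis theorem), say
`A ≅ k[X₁, …, Xₙ] ⧸ (f₁, …, f_r)`. The finitely many coefficients of the `fᵢ` generate a
subfield `m` finitely generated over `ℚ`, over which the `fᵢ` are defined; then
`B = m[X₁, …, Xₙ] ⧸ (f₁, …, f_r)` works, because base change commutes with quotients and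
`k ⊗_m m[X] ≅ k[X]`.
-/

open TensorProduct

namespace MvPolynomial

variable {σ : Type*}

theorem map_includeRight_map_algebraTensorAlgEquiv (R S : Type*) [CommRing R] [CommRing S]
    [Algebra R S] (J : Ideal (MvPolynomial σ R)) :
    (J.map (Algebra.TensorProduct.includeRight (A := S))).map
      (algebraTensorAlgEquiv (σ := σ) R S : S ⊗[R] MvPolynomial σ R →+* MvPolynomial σ S) =
      J.map (map (algebraMap R S)) := by
  rw [← Ideal.map_coe (Algebra.TensorProduct.includeRight (A := S)), Ideal.map_map]
  congr 1
  exact RingHom.ext fun p => by simp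

noncomputable def tensorQuotientEquivQuotientMap (R S : Type*) [CommRing R] [CommRing S]
    [Algebra R S] (J : Ideal (MvPolynomial σ R)) :
    S ⊗[R] (MvPolynomial σ R ⧸ J) ≃ₐ[S] MvPolynomial σ S ⧸ J.map (map (algebraMap R S)) :=
  (Algebra.TensorProduct.tensorQuotientEquiv S _ S J).trans <|
    Ideal.quotientEquivAlg _ _ (algebraTensorAlgEquiv R S)
      (map_includeRight_map_algebraTensorAlgEquiv R S J).symm

theorem exists_fg_intermediateField_subset_range_map (F : Type*) {K : Type*} [Field F] [Field K]
    [Algebra F K] (s : Finset (MvPolynomial σ K)) :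
    ∃ m : IntermediateField F K, m.FG ∧ ↑s ⊆ Set.range (map (σ := σ) (algebraMap m K)) := by
  classical
  refine ⟨IntermediateField.adjoin F ↑(s.biUnion coeffs), ⟨_, rfl⟩, fun p hp => ?_⟩
  rw [mem_range_map_iff_coeffs_subset]
  intro c hc
  exact ⟨⟨c, IntermediateField.subset_adjoin _ _ (by simpa using ⟨p, hp, hc⟩)⟩, rfl⟩

end MvPolynomial

theorem Ideal.FG.exists_fg_intermediateField_map_eq (F : Type*) {K σ : Type*} [Field F] [Field K]
    [Algebra F K] {I : Ideal (MvPolynomial σ K)} (hI : I.FG) :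
    ∃ m : IntermediateField F K, m.FG ∧
      ∃ J : Ideal (MvPolynomial σ m), J.map (MvPolynomial.map (algebraMap m K)) = I := by
  obtain ⟨s, rfl⟩ := hI
  obtain ⟨m, hm, hs⟩ := MvPolynomial.exists_fg_intermediateField_subset_range_map F s
  obtain ⟨t, ht⟩ := Set.subset_range_iff_exists_image_eq.mp hs
  exact ⟨m, hm, Ideal.span t, by rw [Ideal.map_span, ht]⟩

/-- **Theorem 3.1 (affine form).**
Let `k` be a field of characteristic zero and `A` a commutative `k`-algebra of finite
type.  Then there is an intermediate field `ℚ ⊆ m ⊆ k`, finitely generated as a field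
extension of `ℚ`, and a finite type `m`-algebra `B` such that `A ≅ k ⊗_m B` as
`k`-algebras. -/
theorem descend_finiteType_algebra_to_finitely_generated_subfield_of_rat
    {k : Type} [Field k] [CharZero k]
    (A : Type) [CommRing A] [Algebra k A] [Algebra.FiniteType k A] :
    ∃ m : IntermediateField ℚ k, m.FG ∧
      ∃ (B : Type) (cB : CommRing B),
        letI : CommRing B := cB
        ∃ aB : Algebra m B,
          letI : Algebra m B := aB
          Algebra.FiniteType m B ∧ Nonempty (A ≃ₐ[k] (k ⊗[m] B)) := by
  obtain ⟨n, f, hf, hker⟩ := (Algebra.FinitePresentation.of_finiteType.mp ‹_› :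
    Algebra.FinitePresentation k A).out
  obtain ⟨m, hm, J, hJ⟩ := hker.exists_fg_intermediateField_map_eq ℚ
  refine ⟨m, hm, MvPolynomial (Fin n) m ⧸ J, inferInstance, inferInstance, inferInstance, ⟨?_⟩⟩
  exact (Ideal.quotientKerAlgEquivOfSurjective hf).symm.trans <|
    (Ideal.quotientEquivAlgOfEq k hJ.symm).trans
      (MvPolynomial.tensorQuotientEquivQuotientMap m k J).symm
end

section
/- Let l be a field, let k be a subfield of l, and let A be a commutative l-algebra of finite type. Then there exist an intermediate field m with k ⊆ m ⊆ l which is finitely generated as a field extension of k, and a finite type m-algebra B, together with an isomorphism of l-algebras A ≅ l ⊗_m B. -/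
open TensorProduct

/-! Present `A` as `l[X₁, …, Xₙ] ⧸ J`. By Hilbert's basis theorem `J` is generated by
finitely many polynomials; adjoining their coefficients to `k` gives a finitely generated `m`
over which the generators are defined, so `J` is extended from an ideal `I` of `m[X₁, …, Xₙ]`,
and `A ≅ l[X] ⧸ I·l[X] ≅ l ⊗_m (m[X] ⧸ I)`. -/

namespace MvPolynomial

variable {σ R S : Type*} [CommRing R] [CommRing S]

theorem exists_ideal_map_eq_span_of_coeffs_subset {f : R →+* S} {s : Set (MvPolynomial σ S)}
    (hs : ∀ p ∈ s, (p.coeffs : Set S) ⊆ Set.range f) :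
    ∃ I : Ideal (MvPolynomial σ R), I.map (map f) = Ideal.span s := by
  have hs_range : s ⊆ Set.range (map f) := fun p hp =>
    mem_range_map_iff_coeffs_subset.mpr (hs p hp)
  refine ⟨Ideal.span (map f ⁻¹' s), ?_⟩
  rw [Ideal.map_span, Set.image_preimage_eq_of_subset hs_range]

variable [Algebra R S]

theorem map_includeRight_eq_map_algebraMap (I : Ideal (MvPolynomial σ R)) :
    (I.map (Algebra.TensorProduct.includeRight (R := R) (A := S))).map
      (algebraTensorAlgEquiv R S) = I.map (map (algebraMap R S)) := by
  have hcomp : (algebraTensorAlgEquiv (σ := σ) R S).toRingHom.comp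
      Algebra.TensorProduct.includeRight.toRingHom = map (algebraMap R S) := by
    ext <;> simp
  rw [← hcomp, ← Ideal.map_map]
  rfl

noncomputable def quotientMapEquivTensorQuotient (I : Ideal (MvPolynomial σ R)) :
    (MvPolynomial σ S ⧸ I.map (map (algebraMap R S))) ≃ₐ[S]
      S ⊗[R] (MvPolynomial σ R ⧸ I) :=
  (Ideal.quotientEquivAlg _ _ (algebraTensorAlgEquiv R S)
      (map_includeRight_eq_map_algebraMap I).symm).symm.trans
    (Algebra.TensorProduct.tensorQuotientEquiv S _ S I).symm

end MvPolynomial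

/-- **Descent to a finitely generated subextension** (first step in the proof of
Theorem 1.2).  Let `k ⊆ l` be fields and `A` a commutative `l`-algebra of finite type.
Then there is an intermediate field `k ⊆ m ⊆ l`, finitely generated as a field
extension of `k`, and a finite type `m`-algebra `B` such that `A ≅ l ⊗_m B` as
`l`-algebras. -/
theorem descend_finiteType_algebra_to_finitely_generated_subextension
    {k l : Type} [Field k] [Field l] [Algebra k l]
    (A : Type) [CommRing A] [Algebra l A] [Algebra.FiniteType l A] :
    ∃ m : IntermediateField k l, m.FG ∧
      ∃ (B : Type) (cB : CommRing B),
        letI : CommRing B := cB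
        ∃ aB : Algebra m B,
          letI : Algebra m B := aB
          Algebra.FiniteType m B ∧ Nonempty (A ≃ₐ[l] (l ⊗[m] B)) := by
  classical
  obtain ⟨n, φ, hφ⟩ := Algebra.FiniteType.iff_quotient_mvPolynomial''.mp ‹_›
  obtain ⟨s, hs⟩ : (RingHom.ker φ).FG := IsNoetherian.noetherian _
  set m := IntermediateField.adjoin k ((s.biUnion MvPolynomial.coeffs : Finset l) : Set l)
  have hcoeffs : ∀ p ∈ (s : Set (MvPolynomial (Fin n) l)),
      (p.coeffs : Set l) ⊆ Set.range (algebraMap m l) := by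
    intro p hp c hc
    exact ⟨⟨c, IntermediateField.subset_adjoin _ _ (by simpa using ⟨p, hp, hc⟩)⟩, rfl⟩
  obtain ⟨I, hI⟩ := MvPolynomial.exists_ideal_map_eq_span_of_coeffs_subset hcoeffs
  refine ⟨m, IntermediateField.fg_adjoin_finset _, _ ⧸ I, _, _, inferInstance, ⟨?_⟩⟩
  exact (Ideal.quotientKerAlgEquivOfSurjective hφ).symm.trans <|
    (Ideal.quotientEquivAlgOfEq l (hI.trans hs).symm).trans
      (MvPolynomial.quotientMapEquivTensorQuotient I)
end

section
/- Let l be a field, k a subfield of l, C a commutative k-algebra of finite type, A a commutative l-algebra of finite type, and φ : C → A a k-algebra homomorphism. Then there exist an intermediate field m with k ⊆ m ⊆ l, finitely generated as a field extension of k, a finite type m-algebra B, a k-algebra homomorphism ψ : C → B, and an isomorphism of l-algebras Θ : l ⊗_m B ≅ A such that for every c ∈ C one has Θ(1 ⊗ ψ(c)) = φ(c). -/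
/-!
Over the field `l` the algebra `A` is finitely presented; adjoin to `k` the finitely many
coefficients of its relations together with those of polynomials representing the images of
generators of `C`. Over the resulting field `m` the same relations present an algebra `B` with
`l ⊗[m] B ≃ A`. Since `l` is flat over the field `m`, `B` embeds into `A` through `b ↦ 1 ⊗ b`,
and its image contains `φ` of the generators of `C`, hence all of `φ(C)`; so `φ` factors
through `B`.
-/

open TensorProduct

namespace AlgHom

variable {R A B C : Type*} [CommSemiring R] [Semiring A] [Semiring B] [Semiring C]
  [Algebra R A] [Algebra R B] [Algebra R C]

theorem range_le_of_adjoin_eq_top {s : Set C} (hs : Algebra.adjoin R s = ⊤) (φ : C →ₐ[R] A)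
    {D : Subalgebra R A} (h : φ '' s ⊆ D) : φ.range ≤ D := by
  rw [← Algebra.map_top, ← hs, AlgHom.map_adjoin]
  exact Algebra.adjoin_le h

theorem exists_comp_eq_of_range_le {g : B →ₐ[R] A} (hg : Function.Injective g) {φ : C →ₐ[R] A}
    (h : φ.range ≤ g.range) : ∃ ψ : C →ₐ[R] B, g.comp ψ = φ :=
  ⟨(AlgEquiv.ofInjective g hg).symm.toAlgHom.comp (φ.codRestrict _ fun c => h ⟨c, rfl⟩), by
    ext c
    exact congrArg Subtype.val ((AlgEquiv.ofInjective g hg).apply_symm_apply _)⟩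

end AlgHom

theorem MvPolynomial.aeval_mem_range_of_coeffs_subset_range {R₀ R S ι : Type*}
    [CommSemiring R₀] [CommSemiring R] [CommSemiring S] [Algebra R₀ R] [Algebra R S]
    [Algebra R₀ S] [IsScalarTower R₀ R S] (x : ι → S) {q : MvPolynomial ι R}
    (hq : (q.coeffs : Set R) ⊆ Set.range (algebraMap R₀ R)) :
    aeval x q ∈ (aeval x : MvPolynomial ι R₀ →ₐ[R₀] S).range := by
  obtain ⟨q₀, rfl⟩ := mem_range_map_iff_coeffs_subset.mpr hq
  exact ⟨q₀, (aeval_map_algebraMap R x q₀).symm⟩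

theorem Algebra.Presentation.exists_fg_intermediateField_hasCoeffs {k l A ι σ : Type*}
    [Field k] [Field l] [Algebra k l] [CommRing A] [Algebra l A] (P : Presentation l A ι σ)
    [Finite σ] {t : Set A} (ht : t.Finite) :
    ∃ m : IntermediateField k l, m.FG ∧ P.HasCoeffs m ∧
      t ⊆ (MvPolynomial.aeval P.val : MvPolynomial ι m →ₐ[m] A).range := by
  choose q hq using P.aeval_val_surjective
  have hfin : (P.coeffs ∪ ⋃ a ∈ t, ((q a).coeffs : Set l)).Finite :=
    P.finite_coeffs.union (ht.biUnion fun a _ => (q a).coeffs.finite_toSet)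
  refine ⟨IntermediateField.adjoin k _, IntermediateField.fg_adjoin_of_finite hfin,
    ⟨fun x hx => ⟨⟨x, IntermediateField.subset_adjoin k _ (Or.inl hx)⟩, rfl⟩⟩, fun a ha => ?_⟩
  rw [← hq a]
  refine MvPolynomial.aeval_mem_range_of_coeffs_subset_range P.val fun x hx => ?_
  exact ⟨⟨x, IntermediateField.subset_adjoin k _ (Or.inr (Set.mem_biUnion ha hx))⟩, rfl⟩

/-- **Descent of morphisms to a finitely generated subextension** (used in the proof of
Theorem 1.2).  Let `k ⊆ l` be fields, `C` a finite type `k`-algebra, `A` a finite type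
`l`-algebra, and `φ : C → A` a `k`-algebra homomorphism.  Then there are an
intermediate field `k ⊆ m ⊆ l` finitely generated over `k`, a finite type `m`-algebra
`B`, a `k`-algebra homomorphism `ψ : C → B`, and an `l`-algebra isomorphism
`Θ : l ⊗_m B ≅ A` with `Θ(1 ⊗ ψ(c)) = φ(c)` for all `c ∈ C`. -/
theorem descend_algHom_to_finitely_generated_subextension
    {k l : Type} [Field k] [Field l] [Algebra k l]
    (C : Type) [CommRing C] [Algebra k C] [Algebra.FiniteType k C]
    (A : Type) [CommRing A] [Algebra l A] [Algebra.FiniteType l A]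
    [Algebra k A] [IsScalarTower k l A]
    (φ : C →ₐ[k] A) :
    ∃ m : IntermediateField k l, m.FG ∧
      ∃ (B : Type) (cB : CommRing B),
        letI : CommRing B := cB
        ∃ aB : Algebra m B,
          letI : Algebra m B := aB
          Algebra.FiniteType m B ∧
            (letI : Algebra k B := ((algebraMap m B).comp (algebraMap k m)).toAlgebra
             ∃ (ψ : C →ₐ[k] B) (Θ : (l ⊗[m] B) ≃ₐ[l] A),
               ∀ c : C, Θ (1 ⊗ₜ ψ c) = φ c) := by
  obtain ⟨s, hs⟩ := Algebra.FiniteType.out (R := k) (A := C)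
  have : Algebra.FinitePresentation l A := Algebra.FinitePresentation.of_finiteType.mp ‹_›
  let P := Algebra.Presentation.ofFinitePresentation l A
  obtain ⟨m, hm, _, hφs⟩ :=
    P.exists_fg_intermediateField_hasCoeffs (k := k) ((s : Set C).toFinite.image φ)
  let B := P.ModelOfHasCoeffs m
  let Θ := P.tensorModelOfHasCoeffsEquiv m
  refine ⟨m, hm, B, inferInstance, inferInstance, inferInstance, ?_⟩
  let _ : Algebra k B := ((algebraMap m B).comp (algebraMap k m)).toAlgebra
  -- otherwise `SMul k B` resolves to the action inherited by the quotient `B` of `MvPolynomial _ m`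
  let _ : SMul k B := Algebra.toSMul
  have : IsScalarTower k m B := @IsScalarTower.of_algebraMap_eq' k m B _ _ _ _ _ _ rfl
  let g : B →ₐ[k] A :=
    ((Θ.toAlgHom.restrictScalars m).comp Algebra.TensorProduct.includeRight).restrictScalars k
  have hg : Function.Injective g :=
    Θ.injective.comp (Algebra.TensorProduct.includeRight_injective (algebraMap m l).injective)
  have hrange : φ.range ≤ g.range := by
    refine φ.range_le_of_adjoin_eq_top hs ?_
    rintro _ ⟨c, hc, rfl⟩
    obtain ⟨y, hy⟩ := hφs ⟨c, hc, rfl⟩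
    refine ⟨Ideal.Quotient.mk _ y, (P.tensorModelOfHasCoeffsEquiv_tmul m 1 y).trans ?_⟩
    rw [map_one, one_mul, ← hy]
    rfl
  obtain ⟨ψ, hψ⟩ := AlgHom.exists_comp_eq_of_range_le hg hrange
  exact ⟨ψ, Θ, fun c => DFunLike.congr_fun hψ c⟩
end

section
/- Let k be a field and let m be a field extension of k which is finitely generated as a field extension (i.e., m is generated as a field over k by finitely many elements), and let B be a commutative m-algebra of finite type. Then there exist a k-subalgebra R of m which is an integral domain of finite type over k and has m as its field of fractions (i.e., m is a localization of R at R∖{0}, so IsFractionRing R m holds), and a finite type R-algebra B₀, together with an isomorphism of m-algebras m ⊗_R B₀ ≅ B. -/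
/-!
Over the Noetherian field `m`, the algebra `B` is finitely presented. Adjoining to `k` the finitely
many field generators of `m/k` together with the coefficients of the relations of a finite
presentation gives a finite type `k`-algebra `R ⊆ m` with fraction field `m`, over which the same
relations define a model `B₀` of `B`.
-/

open TensorProduct

theorem IntermediateField.isFractionRing_algebraAdjoin_of_adjoin_eq_top {F E : Type*} [Field F]
    [Field E] [Algebra F E] {S : Set E} (h : adjoin F S = ⊤) :
    IsFractionRing (Algebra.adjoin F S) E :=
  .of_field _ _ fun z ↦
    have ⟨x, hx, y, hy, eq⟩ := mem_adjoin_iff_div.mp (h ▸ mem_top (x := z))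
    ⟨⟨x, hx⟩, ⟨y, hy⟩, eq⟩

theorem Algebra.Presentation.hasCoeffs_adjoin_of_coeffs_subset {k R S ι σ : Type*} [CommRing k]
    [CommRing R] [CommRing S] [Algebra k R] [Algebra R S] (P : Presentation R S ι σ) {s : Set R}
    (hs : P.coeffs ⊆ s) : P.HasCoeffs (adjoin k s) :=
  ⟨fun x hx ↦ ⟨⟨x, subset_adjoin (hs hx)⟩, rfl⟩⟩

/-- **Spreading out over a model of the ground field** (second step in the proof of
Theorem 1.2).  Let `m/k` be a finitely generated field extension and `B` a finite type
`m`-algebra.  Then there is a `k`-subalgebra `R ⊆ m` which is an integral domain of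
finite type over `k` with fraction field `m`, and a finite type `R`-algebra `B₀` with
`m ⊗_R B₀ ≅ B` as `m`-algebras. -/
theorem descend_finiteType_algebra_to_model_of_ground_field
    {k m : Type} [Field k] [Field m] [Algebra k m]
    (hfg : (⊤ : IntermediateField k m).FG)
    (B : Type) [CommRing B] [Algebra m B] [Algebra.FiniteType m B] :
    ∃ R : Subalgebra k m,
      IsDomain R ∧ Algebra.FiniteType k R ∧ IsFractionRing R m ∧
        ∃ (B₀ : Type) (cB₀ : CommRing B₀),
          letI : CommRing B₀ := cB₀
          ∃ aB₀ : Algebra R B₀,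
            letI : Algebra R B₀ := aB₀
            Algebra.FiniteType R B₀ ∧ Nonempty ((m ⊗[R] B₀) ≃ₐ[m] B) := by
  obtain ⟨S, hS⟩ := hfg
  have : Algebra.FinitePresentation m B := Algebra.FinitePresentation.of_finiteType.mp ‹_›
  let P := Algebra.Presentation.ofFinitePresentation m B
  let U : Set m := ↑S ∪ P.coeffs
  have : P.HasCoeffs (Algebra.adjoin k U) :=
    P.hasCoeffs_adjoin_of_coeffs_subset Set.subset_union_right
  have hU : IntermediateField.adjoin k U = ⊤ :=
    top_le_iff.mp (hS ▸ IntermediateField.adjoin.mono k _ _ Set.subset_union_left)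
  exact ⟨Algebra.adjoin k U, inferInstance,
    .adjoin_of_finite (S.finite_toSet.union P.finite_coeffs),
    IntermediateField.isFractionRing_algebraAdjoin_of_adjoin_eq_top hU,
    P.ModelOfHasCoeffs (Algebra.adjoin k U), inferInstance, inferInstance, inferInstance,
    ⟨P.tensorModelOfHasCoeffsEquiv _⟩⟩
end

section
/- Let (R, 𝔪) be a commutative Noetherian local ring, let R[X] be the polynomial ring in one variable, and let I = 𝔪·R[X] + (X) be the ideal generated by the image of 𝔪 and by X. Then for every n ∈ ℕ, the length of R[X]/I^{n+1} as an R-module equals the finite sum ∑_{j=0}^{n} length_R(R/𝔪^{j+1}). -/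
open Polynomial

/-- The length of a module: the Krull dimension of its lattice of submodules
(read in `ℕ∞`, the lattice of submodules being nonempty). -/
noncomputable def moduleLength (R M : Type*) [Ring R] [AddCommGroup M] [Module R M] : ℕ∞ :=
  (Order.krullDim (Submodule R M)).unbotD 0

/-! Write `I = J·R[X] + (X)`. Multiplication by `X` and evaluation at `0` give an exact sequence
of `R`-modules `0 → R[X]/I^k → R[X]/I^(k+1) → R/J^(k+1) → 0`: exactness in the middle is
`p = X·(p.divX) + p(0)`, and injectivity follows from `I^(k+1) = J^(k+1)·R[X] + X·I^k`, whose
first summand is closed under division by `X`. Additivity of length along these sequences and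
induction on `k` give the sum. -/

theorem moduleLength_eq_length (R M : Type*) [Ring R] [AddCommGroup M] [Module R M] :
    moduleLength R M = Module.length R M := by
  rw [moduleLength, ← Module.coe_length, WithBot.unbotD_coe]

theorem Ideal.add_pow_succ {R : Type*} [CommSemiring R] (a b : Ideal R) (k : ℕ) :
    (a + b) ^ (k + 1) = a ^ (k + 1) + b * (a + b) ^ k := by
  refine le_antisymm ?_ (sup_le (Ideal.pow_right_mono le_sup_left _) ?_)
  · induction k with
    | zero => simp
    | succ k ih =>
      calc (a + b) ^ (k + 2) = (a + b) ^ (k + 1) * a + b * (a + b) ^ (k + 1) := by ring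
        _ ≤ (a ^ (k + 1) + b * (a + b) ^ k) * a + b * (a + b) ^ (k + 1) := by gcongr
        _ = a ^ (k + 2) + b * ((a + b) ^ k * a + (a + b) ^ (k + 1)) := by ring
        _ ≤ a ^ (k + 2) + b * (a + b) ^ (k + 1) := by
          gcongr
          exact sup_le (Ideal.mul_mono_right le_sup_left) le_rfl
  · exact (Ideal.mul_mono_left le_sup_right).trans_eq (pow_succ' _ _).symm

namespace Polynomial

variable {R : Type*} [CommRing R]

theorem mem_map_C_of_X_mul_mem {J : Ideal R} {p : R[X]} (h : X * p ∈ J.map C) :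
    p ∈ J.map C :=
  Ideal.mem_map_C_iff.2 fun n ↦ by simpa [coeff_X_mul] using Ideal.mem_map_C_iff.1 h (n + 1)

variable (J : Ideal R)

theorem map_C_pow_le_pow (n : ℕ) :
    (J ^ n).map C ≤ (J.map (C : R →+* R[X]) + Ideal.span {X}) ^ n := by
  rw [Ideal.map_pow]
  exact Ideal.pow_right_mono le_sup_left n

theorem X_mul_mem_pow_succ_iff {k : ℕ} {p : R[X]} :
    X * p ∈ (J.map (C : R →+* R[X]) + Ideal.span {X}) ^ (k + 1) ↔
      p ∈ (J.map (C : R →+* R[X]) + Ideal.span {X}) ^ k := by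
  refine ⟨fun h ↦ ?_, fun h ↦ ?_⟩
  · rw [Ideal.add_pow_succ, ← Ideal.map_pow, Submodule.add_eq_sup] at h
    obtain ⟨u, hu, _, hv, huv⟩ := Submodule.mem_sup.1 h
    obtain ⟨q, hq, rfl⟩ := Ideal.mem_span_singleton_mul.1 hv
    have hpq : p - q ∈ (J ^ (k + 1)).map C :=
      mem_map_C_of_X_mul_mem (by rwa [mul_sub, ← huv, add_sub_cancel_right])
    rw [← sub_add_cancel p q]
    exact add_mem (Ideal.pow_le_pow_right k.le_succ (map_C_pow_le_pow J _ hpq)) hq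
  · rw [pow_succ']
    exact Ideal.mul_mem_mul (Ideal.mem_sup_right (Ideal.mem_span_singleton_self X)) h

theorem map_C_add_span_X_pow_le_comap_aeval_zero (k : ℕ) :
    (J.map (C : R →+* R[X]) + Ideal.span {X}) ^ k ≤ (J ^ k).comap (aeval (0 : R)) := by
  refine (Ideal.pow_right_mono (sup_le ?_ ?_) k).trans (Ideal.le_comap_pow _ k)
  · exact Ideal.map_le_iff_le_comap.2 fun r hr ↦ by simpa using hr
  · simp [Ideal.span_le]

theorem length_quotient_pow_succ (k : ℕ) :
    Module.length R (R[X] ⧸ (J.map (C : R →+* R[X]) + Ideal.span {X}) ^ (k + 1)) =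
      Module.length R (R[X] ⧸ (J.map (C : R →+* R[X]) + Ideal.span {X}) ^ k) +
        Module.length R (R ⧸ J ^ (k + 1)) := by
  set I := J.map (C : R →+* R[X]) + Ideal.span {X}
  let mulX : R[X] ⧸ I ^ k →ₗ[R] R[X] ⧸ I ^ (k + 1) :=
    (Submodule.mapQ _ _ (LinearMap.mulLeft R[X] X)
      fun _ ↦ (X_mul_mem_pow_succ_iff J).2).restrictScalars R
  let evalZero : R[X] ⧸ I ^ (k + 1) →ₗ[R] R ⧸ J ^ (k + 1) :=
    (Ideal.quotientMapₐ _ (aeval (0 : R))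
      (map_C_add_span_X_pow_le_comap_aeval_zero J _)).toLinearMap
  refine Module.length_eq_add_of_exact mulX evalZero ?_ ?_ ?_
  · rw [injective_iff_map_eq_zero]
    rintro ⟨q⟩ hq
    exact Ideal.Quotient.eq_zero_iff_mem.2
      ((X_mul_mem_pow_succ_iff J).1 (Ideal.Quotient.eq_zero_iff_mem.1 hq))
  · intro y
    obtain ⟨a, rfl⟩ := Ideal.Quotient.mk_surjective y
    exact ⟨Ideal.Quotient.mk _ (C a), by simp [evalZero]⟩
  · intro y
    obtain ⟨p, rfl⟩ := Ideal.Quotient.mk_surjective y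
    refine ⟨fun hp ↦ ⟨Ideal.Quotient.mk _ p.divX, ?_⟩, ?_⟩
    · show Ideal.Quotient.mk _ (X * p.divX) = _
      have hp₀ : p.coeff 0 ∈ J ^ (k + 1) := by
        simpa [evalZero, Ideal.Quotient.eq_zero_iff_mem, ← coeff_zero_eq_aeval_zero] using hp
      rw [Ideal.Quotient.eq, show X * p.divX - p = -C (p.coeff 0) by
        linear_combination X_mul_divX_add p]
      exact neg_mem (map_C_pow_le_pow J _ (Ideal.mem_map_of_mem C hp₀))
    · rintro ⟨z, hz⟩
      obtain ⟨q, rfl⟩ := Ideal.Quotient.mk_surjective z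
      rw [← hz]
      show evalZero (Ideal.Quotient.mk _ (X * q)) = 0
      simp [evalZero]

theorem length_quotient_pow_eq_sum (k : ℕ) :
    Module.length R (R[X] ⧸ (J.map (C : R →+* R[X]) + Ideal.span {X}) ^ k) =
      ∑ j ∈ Finset.range k, Module.length R (R ⧸ J ^ (j + 1)) := by
  induction k with
  | zero => simp
  | succ k ih => rw [length_quotient_pow_succ, ih, Finset.sum_range_succ]

end Polynomial

theorem length_polynomial_quotient_pow_eq_sum_hilbertSamuel_general
    (R : Type*) [CommRing R] [IsLocalRing R] (n : ℕ) :
    moduleLength R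
        (R[X] ⧸ ((IsLocalRing.maximalIdeal R).map (C : R →+* R[X]) +
            Ideal.span {(X : R[X])}) ^ (n + 1)) =
      ∑ j ∈ Finset.range (n + 1),
        moduleLength R (R ⧸ (IsLocalRing.maximalIdeal R) ^ (j + 1)) := by
  simp only [moduleLength_eq_length]
  exact length_quotient_pow_eq_sum _ (n + 1)

/-- **`Λ(H⁰(R)) = H⁰` of the local ring of `X × 𝔸¹` at `(a,0)`** (Section 6.3).
Let `(R, 𝔪)` be a commutative Noetherian local ring and `I = 𝔪·R[X] + (X) ⊆ R[X]`.
Then for every `n`, `length_R (R[X]/I^{n+1}) = ∑_{j=0}^{n} length_R (R/𝔪^{j+1})`. -/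
theorem length_polynomial_quotient_pow_eq_sum_hilbertSamuel
    (R : Type*) [CommRing R] [IsNoetherianRing R] [IsLocalRing R] (n : ℕ) :
    moduleLength R
        (R[X] ⧸ ((IsLocalRing.maximalIdeal R).map (C : R →+* R[X]) +
            Ideal.span {(X : R[X])}) ^ (n + 1)) =
      ∑ j ∈ Finset.range (n + 1),
        moduleLength R (R ⧸ (IsLocalRing.maximalIdeal R) ^ (j + 1)) :=
  length_polynomial_quotient_pow_eq_sum_hilbertSamuel_general R n
end

section
/- Let p, q ∈ ℕ and let S ⊆ ℕ^q (functions Fin q → ℕ) satisfy S + ℕ^q = S. Set 𝔑 = ℕ^p × S ⊆ ℕ^{p+q}, which satisfies 𝔑 + ℕ^{p+q} = 𝔑. Then for all k ∈ ℕ, H_𝔑(k) = Λ^p(H_S)(k), where H_T(k) denotes the number of multi-indices α ∉ T with |α| ≤ k and Λ is the summation operator iterated p times. -/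
open Pointwise

/-- For a diagram `T ⊆ ℕⁿ`, `H_T(k)` is the number of multi-indices `α ∉ T`
with `|α| ≤ k`. -/
noncomputable def diagramHilbertFunction {n : ℕ} (T : Set (Fin n → ℕ)) (k : ℕ) : ℕ :=
  Set.ncard {α : Fin n → ℕ | α ∉ T ∧ ∑ i, α i ≤ k}

/-- The summation operator `Λ(F)(k) = ∑_{j=0}^{k} F(j)` on functions `ℕ → ℕ`. -/
def sumOperator (F : ℕ → ℕ) : ℕ → ℕ := fun k => ∑ j ∈ Finset.range (k + 1), F j

noncomputable def Hgen {ι : Type*} [Fintype ι] (T : Set (ι → ℕ)) (k : ℕ) : ℕ :=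
  Set.ncard {α : ι → ℕ | α ∉ T ∧ ∑ i, α i ≤ k}

lemma finite_sum_le {ι : Type*} [Fintype ι] (k : ℕ) :
    {α : ι → ℕ | ∑ i, α i ≤ k}.Finite := by
  apply Set.Finite.subset (Set.Finite.pi (fun i : ι => Set.finite_Iic k))
  intro α hα
  simp only [Set.mem_pi, Set.mem_univ, Set.mem_Iic, forall_true_left]
  intro i
  exact le_trans (Finset.single_le_sum (f := α) (fun _ _ => Nat.zero_le _)
    (Finset.mem_univ i)) hα

lemma ncard_biUnion_range {α : Type*} (n : ℕ) (f : ℕ → Set α)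
    (hfin : ∀ i, (f i).Finite) (hdisj : ∀ i j, i ≠ j → Disjoint (f i) (f j)) :
    (⋃ i ∈ Finset.range n, f i).ncard = ∑ i ∈ Finset.range n, (f i).ncard := by
  induction n with
  | zero => simp
  | succ n ih =>
    have hset : (⋃ i ∈ Finset.range (n+1), f i) = (⋃ i ∈ Finset.range n, f i) ∪ f n := by
      rw [Finset.range_add_one]
      simp [Set.biUnion_insert, Set.union_comm]
    rw [Finset.sum_range_succ, ← ih, hset]
    rw [Set.ncard_union_eq ?_ ?_ (hfin n)]
    · apply Set.disjoint_iUnion_left.2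
      intro i
      apply Set.disjoint_iUnion_left.2
      intro hi
      exact hdisj i n (by simp at hi; omega)
    · exact Set.Finite.biUnion (Finset.finite_toSet _) (fun i _ => hfin i)

lemma Hgen_equiv {ι κ : Type*} [Fintype ι] [Fintype κ] (e : ι ≃ κ)
    (T : Set (κ → ℕ)) (k : ℕ) :
    Hgen {α : ι → ℕ | (fun j => α (e.symm j)) ∈ T} k = Hgen T k := by
  unfold Hgen
  have hinj : Function.Injective (fun (α : ι → ℕ) => (fun j => α (e.symm j))) := by
    intro a b hab
    funext i
    have := congrFun hab (e i)
    simpa using this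
  rw [← Set.ncard_image_of_injective _ hinj]
  congr 1
  ext β
  constructor
  · rintro ⟨α, ⟨hα1, hα2⟩, rfl⟩
    refine ⟨hα1, ?_⟩
    show ∑ j : κ, α (e.symm j) ≤ k
    rw [Equiv.sum_comp e.symm α]
    exact hα2
  · rintro ⟨hβ1, hβ2⟩
    refine ⟨fun i => β (e i), ⟨?_, ?_⟩, ?_⟩
    · simpa using hβ1
    · show ∑ i : ι, β (e i) ≤ k
      rw [Equiv.sum_comp e (fun j => β j)]
      exact hβ2
    · funext j; simp

lemma Hgen_option {ι : Type*} [Fintype ι] (T : Set (ι → ℕ)) (k : ℕ) :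
    Hgen {α : Option ι → ℕ | (fun i => α (some i)) ∈ T} k
      = ∑ j ∈ Finset.range (k + 1), Hgen T j := by
  classical
  unfold Hgen
  set f : ℕ → Set (Option ι → ℕ) := fun a =>
    {α | (fun i => α (some i)) ∉ T ∧ ∑ o, α o ≤ k ∧ α none = a} with hf
  have hset : {α : Option ι → ℕ | α ∉ {α : Option ι → ℕ | (fun i => α (some i)) ∈ T} ∧ ∑ o, α o ≤ k}
      = ⋃ a ∈ Finset.range (k+1), f a := by
    ext α
    simp only [Set.mem_setOf_eq, Set.mem_iUnion, Finset.mem_range, hf]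
    constructor
    · rintro ⟨h1, h2⟩
      refine ⟨α none, ?_, h1, h2, rfl⟩
      have : α none ≤ ∑ o, α o :=
        Finset.single_le_sum (f := α) (fun _ _ => Nat.zero_le _) (Finset.mem_univ none)
      omega
    · rintro ⟨a, _, h1, h2, _⟩
      exact ⟨h1, h2⟩
  rw [hset, ncard_biUnion_range]
  · have hcard : ∀ a, a ≤ k → (f a).ncard = {β : ι → ℕ | β ∉ T ∧ ∑ i, β i ≤ k - a}.ncard := by
      intro a ha
      have hinj : Set.InjOn (fun (α : Option ι → ℕ) => (fun i => α (some i))) (f a) := by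
        rintro x ⟨_, _, hx⟩ y ⟨_, _, hy⟩ hxy
        funext o
        cases o with
        | none => rw [hx, hy]
        | some i => exact congrFun hxy i
      rw [← Set.ncard_image_of_injOn hinj]
      congr 1
      ext β
      constructor
      · rintro ⟨α, ⟨h1, h2, h3⟩, rfl⟩
        refine ⟨by simpa using h1, ?_⟩
        rw [Fintype.sum_option] at h2
        show ∑ i, α (some i) ≤ k - a
        omega
      · rintro ⟨h1, h2⟩
        refine ⟨fun o => o.elim a β, ⟨by simpa using h1, ?_, rfl⟩, rfl⟩
        have h3 : a + ∑ i, β i ≤ k := by omega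
        simpa [Fintype.sum_option] using h3
    rw [← Finset.sum_range_reflect (fun j => {β : ι → ℕ | β ∉ T ∧ ∑ i, β i ≤ j}.ncard) (k+1)]
    apply Finset.sum_congr rfl
    intro a ha
    simp only [Finset.mem_range] at ha
    rw [hcard a (by omega)]
    norm_num
  · intro a
    apply Set.Finite.subset (finite_sum_le (ι := Option ι) k)
    intro α hα
    exact hα.2.1
  · intro a b hab
    rw [Set.disjoint_left]
    rintro α ⟨_, _, ha⟩ ⟨_, _, hb⟩
    exact hab (ha ▸ hb ▸ rfl)


lemma Hgen_main (q : ℕ) (S : Set (Fin q → ℕ)) :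
    ∀ p k, Hgen {α : Fin (p + q) → ℕ | (fun i => α (Fin.natAdd p i)) ∈ S} k
      = (sumOperator)^[p] (Hgen S) k := by
  intro p
  induction p with
  | zero =>
    intro k
    let e : Fin (0 + q) ≃ Fin q := finCongr (Nat.zero_add q)
    have hsets : {α : Fin (0 + q) → ℕ | (fun i => α (Fin.natAdd 0 i)) ∈ S}
        = {α : Fin (0 + q) → ℕ | (fun j => α (e.symm j)) ∈ S} := by
      ext α
      simp only [Set.mem_setOf_eq]
      have hfun : (fun i => α (Fin.natAdd 0 i)) = (fun j => α (e.symm j)) := by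
        funext i
        congr 1
        apply Fin.ext
        show (0 : ℕ) + i = ((finCongr (Nat.zero_add q)).symm i : ℕ)
        simp
      rw [hfun]
    rw [hsets, Hgen_equiv e S k]
    simp
  | succ p ih =>
    intro k
    have h1 : p + 1 + q = (p + q) + 1 := by omega
    let e : Fin (p + 1 + q) ≃ Option (Fin (p + q)) :=
      (finCongr h1).trans (finSuccEquiv (p + q))
    have hsets : {α : Fin (p + 1 + q) → ℕ | (fun i => α (Fin.natAdd (p + 1) i)) ∈ S}
        = {α : Fin (p + 1 + q) → ℕ | (fun j => α (e.symm j)) ∈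
            {α' : Option (Fin (p + q)) → ℕ |
              (fun i => α' (some i)) ∈ {β : Fin (p + q) → ℕ | (fun i => β (Fin.natAdd p i)) ∈ S}}} := by
      ext α
      simp only [Set.mem_setOf_eq]
      have hfun : (fun i => α (Fin.natAdd (p + 1) i))
          = (fun i => α (e.symm (some (Fin.natAdd p i)))) := by
        funext i
        congr 1
        apply Fin.ext
        show (p + 1 : ℕ) + i = ((((finCongr h1).trans (finSuccEquiv (p + q))).symm) (some (Fin.natAdd p i)) : ℕ)
        simp [Fin.ext_iff]
        omega
      rw [hfun]
    rw [hsets, Hgen_equiv e _ k, Hgen_option _ k]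
    rw [Function.iterate_succ_apply']
    show _ = sumOperator _ k
    unfold sumOperator
    exact Finset.sum_congr rfl fun j _ => ih j

/-- **Hilbert functions of product diagrams** (Section 6.5).
Let `S ⊆ ℕ^q` satisfy `S + ℕ^q = S` and let `𝔑 = ℕ^p × S ⊆ ℕ^{p+q}`.  Then
`𝔑 + ℕ^{p+q} = 𝔑` and `H_𝔑 = Λ^p (H_S)`. -/
theorem diagramHilbertFunction_prod
    (p q : ℕ) (S : Set (Fin q → ℕ))
    (hS : S + (Set.univ : Set (Fin q → ℕ)) = S) :
    ({α : Fin (p + q) → ℕ | (fun i => α (Fin.natAdd p i)) ∈ S} +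
        (Set.univ : Set (Fin (p + q) → ℕ)) =
      {α : Fin (p + q) → ℕ | (fun i => α (Fin.natAdd p i)) ∈ S}) ∧
    ∀ k : ℕ,
      diagramHilbertFunction
          {α : Fin (p + q) → ℕ | (fun i => α (Fin.natAdd p i)) ∈ S} k =
        (sumOperator)^[p] (diagramHilbertFunction S) k := by
  constructor
  · apply Set.Subset.antisymm
    · rintro x hx
      rw [Set.mem_add] at hx
      obtain ⟨a, ha, b, -, rfl⟩ := hx
      show (fun i => (a + b) (Fin.natAdd p i)) ∈ S
      have hab : (fun i => (a + b) (Fin.natAdd p i))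
          = (fun i => a (Fin.natAdd p i)) + (fun i => b (Fin.natAdd p i)) := rfl
      rw [hab, ← hS]
      exact Set.add_mem_add ha (Set.mem_univ _)
    · intro α hα
      rw [Set.mem_add]
      exact ⟨α, hα, 0, Set.mem_univ 0, add_zero α⟩
  · intro k
    exact Hgen_main q S p k
end
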